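/- arXiv:2510.27451 — 2 statements merged into one kernel-verified Lean document; each statement's English description precedes it below -/
import Mathlib

section
/- Let b ∈ ℝ^d and let μ, ν be Borel probability measures on ℝ^d with finite first moments and common barycentre [μ] = [ν] = b. Then for every bi-martingale pair (γ,ζ) for (μ,ν), the push-forward measure ρ = ζ#γ is a Borel probability measure on ℝ^d with finite first moment satisfying ρ ≽_c μ and ρ ≽_c ν. -/
open MeasureTheory Filter Topology
open scoped ENNReal RealInnerProductSpace Classical

noncomputable section

/-- Second moment `m₂(μ) = ∫ ‖x‖² dμ`. -/
def m2 {d : ℕ} (μ : Measure (EuclideanSpace ℝ (Fin d))) : ℝ := ∫ x, ‖x‖ ^ 2 ∂μ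

/-- Barycentre `[μ] = ∫ x dμ`. -/
def bary {d : ℕ} (μ : Measure (EuclideanSpace ℝ (Fin d))) : EuclideanSpace ℝ (Fin d) :=
  ∫ x, x ∂μ

/-- `ConvexOrderLE μ ν` means `μ ≼_c ν`, i.e. `ν` dominates `μ` in the convex order:
`∫ φ dμ ≤ ∫ φ dν` for every convex `φ : ℝ^d → ℝ` integrable with respect to both. -/
def ConvexOrderLE {d : ℕ} (μ ν : Measure (EuclideanSpace ℝ (Fin d))) : Prop :=
  ∀ φ : EuclideanSpace ℝ (Fin d) → ℝ, ConvexOn ℝ Set.univ φ →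
    Integrable φ μ → Integrable φ ν → ∫ x, φ x ∂μ ≤ ∫ x, φ x ∂ν

/-- Admissible potentials for the Zolotarev-2 problem: differentiable functions whose
gradient is Lipschitz with constant `1`. -/
def ZolAdmissible {d : ℕ} (u : EuclideanSpace ℝ (Fin d) → ℝ) : Prop :=
  Differentiable ℝ u ∧ LipschitzWith 1 (fun x => gradient u x)

/-- The Zolotarev-2 distance. -/
def Z2 {d : ℕ} (μ ν : Measure (EuclideanSpace ℝ (Fin d))) : ℝ :=
  sSup {r : ℝ | ∃ u : EuclideanSpace ℝ (Fin d) → ℝ, ZolAdmissible u ∧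
    r = (∫ x, u x ∂μ) - ∫ x, u x ∂ν}

/-- `𝒞(μ,ν)`: the least second moment of a common convex dominant of `μ` and `ν`. -/
def Cmin {d : ℕ} (μ ν : Measure (EuclideanSpace ℝ (Fin d))) : ℝ :=
  sInf {r : ℝ | ∃ ρ : Measure (EuclideanSpace ℝ (Fin d)), IsProbabilityMeasure ρ ∧
    Integrable (fun x => ‖x‖ ^ 2) ρ ∧ ConvexOrderLE μ ρ ∧ ConvexOrderLE ν ρ ∧ r = m2 ρ}

/-- Bounded Borel vector field. -/
def BoundedBorel {d : ℕ} (Φ : EuclideanSpace ℝ (Fin d) → EuclideanSpace ℝ (Fin d)) : Prop :=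
  Measurable Φ ∧ ∃ C : ℝ, ∀ x, ‖Φ x‖ ≤ C

/-- A bi-martingale pair `(γ, ζ)` for `(μ, ν)`. -/
def IsBiMartingalePair {d : ℕ} (μ ν : Measure (EuclideanSpace ℝ (Fin d)))
    (γ : Measure (EuclideanSpace ℝ (Fin d) × EuclideanSpace ℝ (Fin d)))
    (ζ : EuclideanSpace ℝ (Fin d) × EuclideanSpace ℝ (Fin d) → EuclideanSpace ℝ (Fin d)) :
    Prop :=
  IsProbabilityMeasure γ ∧ γ.map Prod.fst = μ ∧ γ.map Prod.snd = ν ∧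
  Measurable ζ ∧ Integrable ζ γ ∧
  (∀ Φ, BoundedBorel Φ → ∫ p, ⟪Φ p.1, ζ p - p.1⟫ ∂γ = 0) ∧
  (∀ Ψ, BoundedBorel Ψ → ∫ p, ⟪Ψ p.2, ζ p - p.2⟫ ∂γ = 0)

/-- A martingale plan from `μ` to `ν`. -/
def IsMartingalePlan {d : ℕ} (μ ν : Measure (EuclideanSpace ℝ (Fin d)))
    (γ : Measure (EuclideanSpace ℝ (Fin d) × EuclideanSpace ℝ (Fin d))) : Prop :=
  IsProbabilityMeasure γ ∧ γ.map Prod.fst = μ ∧ γ.map Prod.snd = ν ∧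
  ∀ Φ, BoundedBorel Φ → ∫ p, ⟪Φ p.1, p.2 - p.1⟫ ∂γ = 0

/-- Convexity for `ℝ ∪ {+∞}`-valued functions (modelled in `EReal`). -/
def EConvexOn {d : ℕ} (f : EuclideanSpace ℝ (Fin d) → EReal) : Prop :=
  ∀ x y : EuclideanSpace ℝ (Fin d), ∀ t : ℝ, 0 ≤ t → t ≤ 1 →
    f (t • x + (1 - t) • y) ≤ (t : EReal) * f x + ((1 - t : ℝ) : EReal) * f y

/-- Strict convexity for `ℝ ∪ {+∞}`-valued functions. -/
def EStrictConvexOn {d : ℕ} (f : EuclideanSpace ℝ (Fin d) → EReal) : Prop :=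
  ∀ x y : EuclideanSpace ℝ (Fin d), x ≠ y → ∀ t : ℝ, 0 < t → t < 1 →
    f x ≠ ⊤ → f y ≠ ⊤ →
    f (t • x + (1 - t) • y) < (t : EReal) * f x + ((1 - t : ℝ) : EReal) * f y

/-- Superlinearity `f(z)/‖z‖ → +∞` for `EReal`-valued functions. -/
def ESuperlinear {d : ℕ} (f : EuclideanSpace ℝ (Fin d) → EReal) : Prop :=
  ∀ M : ℝ, ∃ R : ℝ, ∀ z, R ≤ ‖z‖ → ((M * ‖z‖ : ℝ) : EReal) ≤ f z

/-- Superlinearity `h(z)/‖z‖ → +∞` for real-valued functions. -/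
def SuperlinearReal {d : ℕ} (h : EuclideanSpace ℝ (Fin d) → ℝ) : Prop :=
  ∀ M : ℝ, ∃ R : ℝ, ∀ z, R ≤ ‖z‖ → M * ‖z‖ ≤ h z

/-- Integral of an `ℝ ∪ {+∞}`-valued function, with value `+∞` when the function fails to
be (almost everywhere finite and) integrable. -/
def eintegral {α : Type*} [MeasurableSpace α] (ρ : Measure α) (f : α → EReal) : EReal :=
  if Integrable (fun x => (f x).toReal) ρ ∧ ∀ᵐ x ∂ρ, f x ≠ ⊤ then
    ((∫ x, (f x).toReal ∂ρ : ℝ) : EReal)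
  else ⊤

/-- The coupling map `ζ̄` associated with a Zolotarev potential `u`. -/
def zetaBar {d : ℕ} (u : EuclideanSpace ℝ (Fin d) → ℝ)
    (p : EuclideanSpace ℝ (Fin d) × EuclideanSpace ℝ (Fin d)) : EuclideanSpace ℝ (Fin d) :=
  (1 / 2 : ℝ) • (p.1 + p.2) + (1 / 2 : ℝ) • (gradient u p.1 - gradient u p.2)

/-!
Under `γ`, the first bi-martingale identity tested against `Φ = 𝟙_A • v` says that
`∫_{p.1 ∈ A} (ζ - p.1) dγ = 0` for every Borel `A`, i.e. `p.1 = 𝔼_γ[ζ | p.1]`; likewise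
`p.2 = 𝔼_γ[ζ | p.2]`. Conditional Jensen then gives `∫ φ(p.i) dγ ≤ ∫ φ(ζ) dγ` for convex `φ`.
-/

theorem integrable_of_integrable_norm_map {α β : Type*} [MeasurableSpace α] {P : Measure α}
    [NormedAddCommGroup β] [MeasurableSpace β] [OpensMeasurableSpace β]
    [SecondCountableTopology β]
    {X : α → β} (hX : Measurable X) (h : Integrable (fun x => ‖x‖) (P.map X)) :
    Integrable X P :=
  (integrable_norm_iff hX.aestronglyMeasurable).1
    ((integrable_map_measure continuous_norm.aestronglyMeasurable hX.aemeasurable).1 h)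

section Jensen

variable {Ω E : Type*} {m mΩ : MeasurableSpace Ω} {P : Measure Ω}
  [NormedAddCommGroup E] [NormedSpace ℝ E] [CompleteSpace E]

theorem ConvexOn.integral_comp_le_of_ae_eq_condExp (hm : m ≤ mΩ) [SigmaFinite (P.trim hm)]
    {φ : E → ℝ} (hφ : ConvexOn ℝ Set.univ φ) (hφc : LowerSemicontinuous φ) {X ζ : Ω → E}
    (hX : X =ᵐ[P] P[ζ | m]) (hζ : Integrable ζ P)
    (hφX : Integrable (fun ω => φ (X ω)) P) (hφζ : Integrable (fun ω => φ (ζ ω)) P) :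
    ∫ ω, φ (X ω) ∂P ≤ ∫ ω, φ (ζ ω) ∂P := by
  calc ∫ ω, φ (X ω) ∂P ≤ ∫ ω, P[φ ∘ ζ | m] ω ∂P := by
        refine integral_mono_ae hφX integrable_condExp ?_
        filter_upwards [hX, hφ.map_condExp_le_univ hm hφc hζ hφζ] with ω hXω hω
        simpa [hXω] using hω
    _ = ∫ ω, φ (ζ ω) ∂P := integral_condExp hm

end Jensen

section BoundedBorel

variable {d : ℕ} {Ω : Type*} [MeasurableSpace Ω] {P : Measure Ω}
  {X ζ : Ω → EuclideanSpace ℝ (Fin d)}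

theorem setIntegral_preimage_eq_of_forall_boundedBorel (hX : Measurable X)
    (hXi : Integrable X P) (hζi : Integrable ζ P)
    (h : ∀ Φ, BoundedBorel Φ → ∫ ω, ⟪Φ (X ω), ζ ω - X ω⟫ ∂P = 0)
    {A : Set (EuclideanSpace ℝ (Fin d))} (hA : MeasurableSet A) :
    ∫ ω in X ⁻¹' A, ζ ω ∂P = ∫ ω in X ⁻¹' A, X ω ∂P := by
  rw [← sub_eq_zero, ← integral_sub hζi.integrableOn hXi.integrableOn]
  refine ext_inner_left ℝ fun v => ?_
  have hΦ : BoundedBorel (A.indicator fun _ => v) :=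
    ⟨measurable_const.indicator hA, ‖v‖, fun _ => norm_indicator_le_norm_self _ _⟩
  calc ⟪v, ∫ ω in X ⁻¹' A, ζ ω - X ω ∂P⟫
      = ∫ ω in X ⁻¹' A, ⟪v, ζ ω - X ω⟫ ∂P := (integral_inner (hζi.sub hXi).integrableOn v).symm
    _ = ∫ ω, ⟪A.indicator (fun _ => v) (X ω), ζ ω - X ω⟫ ∂P := by
        rw [← integral_indicator (hX hA)]
        congr 1 with ω
        by_cases hω : X ω ∈ A <;> simp [hω]
    _ = ⟪v, 0⟫ := by rw [h _ hΦ, inner_zero_right]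

theorem ae_eq_condExp_comap_of_forall_boundedBorel [IsFiniteMeasure P] (hX : Measurable X)
    (hXi : Integrable X P) (hζi : Integrable ζ P)
    (h : ∀ Φ, BoundedBorel Φ → ∫ ω, ⟪Φ (X ω), ζ ω - X ω⟫ ∂P = 0) :
    X =ᵐ[P] P[ζ | MeasurableSpace.comap X inferInstance] := by
  refine ae_eq_condExp_of_forall_setIntegral_eq hX.comap_le hζi
    (fun _ _ _ => hXi.integrableOn) ?_ (comap_measurable X).aestronglyMeasurable
  rintro - ⟨A, hA, rfl⟩ -
  exact (setIntegral_preimage_eq_of_forall_boundedBorel hX hXi hζi h hA).symm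

theorem convexOrderLE_map_of_forall_boundedBorel [IsFiniteMeasure P] (hX : Measurable X)
    (hζ : Measurable ζ) (hXi : Integrable X P) (hζi : Integrable ζ P)
    (h : ∀ Φ, BoundedBorel Φ → ∫ ω, ⟪Φ (X ω), ζ ω - X ω⟫ ∂P = 0) :
    ConvexOrderLE (P.map X) (P.map ζ) := by
  intro φ hφ hφX hφζ
  have hφc : Continuous φ := hφ.locallyLipschitz.continuous
  rw [integral_map hX.aemeasurable hφc.aestronglyMeasurable,
    integral_map hζ.aemeasurable hφc.aestronglyMeasurable]
  exact hφ.integral_comp_le_of_ae_eq_condExp hX.comap_le hφc.lowerSemicontinuous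
    (ae_eq_condExp_comap_of_forall_boundedBorel hX hXi hζi h) hζi
    ((integrable_map_measure hφc.aestronglyMeasurable hX.aemeasurable).1 hφX)
    ((integrable_map_measure hφc.aestronglyMeasurable hζ.aemeasurable).1 hφζ)

end BoundedBorel

theorem stmt_5_general
    {d : ℕ} (μ ν : Measure (EuclideanSpace ℝ (Fin d)))
    (hμ1 : Integrable (fun x => ‖x‖) μ) (hν1 : Integrable (fun x => ‖x‖) ν)
    (γ : Measure (EuclideanSpace ℝ (Fin d) × EuclideanSpace ℝ (Fin d))) (ζ : EuclideanSpace ℝ (Fin d) × EuclideanSpace ℝ (Fin d) → EuclideanSpace ℝ (Fin d))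
    (hpair : IsBiMartingalePair μ ν γ ζ) :
    IsProbabilityMeasure (γ.map ζ) ∧ Integrable (fun x => ‖x‖) (γ.map ζ) ∧
    ConvexOrderLE μ (γ.map ζ) ∧ ConvexOrderLE ν (γ.map ζ) := by
  obtain ⟨hγ, rfl, rfl, hζ, hζi, hfst, hsnd⟩ := hpair
  refine ⟨Measure.isProbabilityMeasure_map hζ.aemeasurable,
    (integrable_map_measure continuous_norm.aestronglyMeasurable hζ.aemeasurable).2 hζi.norm,
    convexOrderLE_map_of_forall_boundedBorel measurable_fst hζ
      (integrable_of_integrable_norm_map measurable_fst hμ1) hζi hfst,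
    convexOrderLE_map_of_forall_boundedBorel measurable_snd hζ
      (integrable_of_integrable_norm_map measurable_snd hν1) hζi hsnd⟩

theorem stmt_5
    {d : ℕ} (b : EuclideanSpace ℝ (Fin d)) (μ ν : Measure (EuclideanSpace ℝ (Fin d)))
    [IsProbabilityMeasure μ] [IsProbabilityMeasure ν]
    (hμ1 : Integrable (fun x => ‖x‖) μ) (hν1 : Integrable (fun x => ‖x‖) ν)
    (hμb : bary μ = b) (hνb : bary ν = b)
    (γ : Measure (EuclideanSpace ℝ (Fin d) × EuclideanSpace ℝ (Fin d))) (ζ : EuclideanSpace ℝ (Fin d) × EuclideanSpace ℝ (Fin d) → EuclideanSpace ℝ (Fin d))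
    (hpair : IsBiMartingalePair μ ν γ ζ) :
    IsProbabilityMeasure (γ.map ζ) ∧ Integrable (fun x => ‖x‖) (γ.map ζ) ∧
    ConvexOrderLE μ (γ.map ζ) ∧ ConvexOrderLE ν (γ.map ζ) :=
  stmt_5_general μ ν hμ1 hν1 γ ζ hpair
end
end

section
/- Let b ∈ ℝ^d and let μ, ν be Borel probability measures on ℝ^d with finite second moments and common barycentre [μ] = [ν] = b. Then μ ≼_c ν if and only if Z₂(μ,ν) = (m₂(ν) − m₂(μ))/2, and this holds if and only if the function u(x) = −|x|²/2 attains the supremum defining Z₂(μ,ν). -/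
open MeasureTheory Filter Topology
open scoped ENNReal RealInnerProductSpace Classical

noncomputable section

/-!
Since the barycentres agree, the gap `∫ u dμ - ∫ u dν` of every admissible `u` is bounded (by
`m₂(μ) + m₂(ν)`), and `u₀ = -‖x‖²/2` has gap exactly `(m₂(ν) - m₂(μ))/2`. Both equivalences thus
reduce to: `μ ≼_c ν` iff every admissible `u` has gap at most `(m₂(ν) - m₂(μ))/2`, i.e. iff
`∫ v dμ ≤ ∫ v dν` for `v = u + ‖x‖²/2`. Such `v` are convex, because `∇u` is `1`-Lipschitz and hence
`∇v = ∇u + id` is monotone. Conversely, a convex `φ` is the increasing limit of `(n + 1) eₙ`, where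
`eₙ` is the Moreau envelope of `φ / (n + 1)`; `eₙ - ‖x‖²/2` is admissible, with gradient `-proxₙ`,
and the proximal map `proxₙ` is `1`-Lipschitz. Monotone convergence concludes.
-/

open Set InnerProductSpace

variable {F : Type*} [NormedAddCommGroup F]

/-- For a proximal map `p` of `ψ` this is the Moreau envelope `x ↦ min_z (ψ z + ‖x - z‖² / 2)`. -/
def moreauEnvelope (ψ : F → ℝ) (p : F → F) (x : F) : ℝ :=
  ψ (p x) + ‖x - p x‖ ^ 2 / 2

lemma mul_moreauEnvelope_div {φ : F → ℝ} {s : ℝ} (hs : 0 < s) (p : F → F) (x : F) :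
    s * moreauEnvelope (fun z => φ z / s) p x = φ (p x) + s * ‖x - p x‖ ^ 2 / 2 := by
  unfold moreauEnvelope
  field_simp

section NormedSpace

variable [NormedSpace ℝ F]

lemma neg_sq_div_le_apply_add (l : F →L[ℝ] ℝ) (w : F) {c : ℝ} (hc : 0 < c) :
    -(‖l‖ ^ 2 / (2 * c)) ≤ l w + c * ‖w‖ ^ 2 / 2 := by
  have hlw : -(‖l‖ * ‖w‖) ≤ l w := neg_le_of_abs_le (l.le_opNorm w)
  have hsq : 0 ≤ (‖l‖ - c * ‖w‖) ^ 2 / (2 * c) := by positivity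
  have hexp : (‖l‖ - c * ‖w‖) ^ 2 / (2 * c)
      = ‖l‖ ^ 2 / (2 * c) - ‖l‖ * ‖w‖ + c * ‖w‖ ^ 2 / 2 := by
    field_simp
    ring
  linarith

lemma ConvexOn.exists_affine_minorant {φ : F → ℝ} (hφ : ConvexOn ℝ univ φ)
    (hlsc : LowerSemicontinuous φ) {x : F} {a : ℝ} (ha : a < φ x) :
    ∃ l : F →L[ℝ] ℝ, ∀ z, a + l (z - x) ≤ φ z := by
  obtain ⟨l, c, hle, hx⟩ := hφ.exists_affine_le_of_lt (𝕜 := ℝ) (mem_univ x) ha isClosed_univ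
    (lowerSemicontinuousOn_univ_iff.2 hlsc)
  refine ⟨l, fun z => ?_⟩
  have hz : l z + c ≤ φ z := hle ⟨z, mem_univ z⟩
  rw [RCLike.re_to_real] at hx
  rw [map_sub]
  linarith

lemma sub_le_mul_moreauEnvelope_div {p : F → F} {φ : F → ℝ} {s : ℝ} (hs : 0 < s) {x : F} {a : ℝ}
    {l : F →L[ℝ] ℝ} (hl : ∀ z, a + l (z - x) ≤ φ z) :
    a - ‖l‖ ^ 2 / (2 * s) ≤ s * moreauEnvelope (fun z => φ z / s) p x := by
  rw [mul_moreauEnvelope_div hs, norm_sub_rev]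
  linarith [hl (p x), neg_sq_div_le_apply_add l (p x - x) hs]

end NormedSpace

section InnerProductSpace

variable [InnerProductSpace ℝ F]

lemma hasGradientAt_of_abs_sub_sub_inner_le_mul_sq [CompleteSpace F] {f : F → ℝ} {a x : F}
    {C : ℝ} (h : ∀ y, |f y - f x - ⟪a, y - x⟫| ≤ C * ‖y - x‖ ^ 2) : HasGradientAt f a x := by
  rw [hasGradientAt_iff_hasFDerivAt]
  refine HasFDerivAt.of_isLittleO ?_
  have hO : (fun y => f y - f x - toDual ℝ F a (y - x)) =O[𝓝 x] fun y => ‖y - x‖ ^ 2 :=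
    Asymptotics.IsBigO.of_bound C (Eventually.of_forall fun y => by
      simpa [toDual_apply_apply, Real.norm_eq_abs] using h y)
  exact hO.trans_isLittleO ((Asymptotics.isLittleO_norm_pow_id one_lt_two).comp_tendsto
    (tendsto_sub_nhds_zero_iff.2 tendsto_id))

lemma hasGradientAt_mul_norm_sq_div_two [CompleteSpace F] (c : ℝ) (x : F) :
    HasGradientAt (fun y => c * ‖y‖ ^ 2 / 2) (c • x) x := by
  refine hasGradientAt_of_abs_sub_sub_inner_le_mul_sq (C := |c| / 2) fun y => ?_
  have hsq : ‖y‖ ^ 2 = ‖x‖ ^ 2 + 2 * ⟪x, y - x⟫ + ‖y - x‖ ^ 2 := by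
    rw [← norm_add_sq_real, add_sub_cancel]
  have hrem : c * ‖y‖ ^ 2 / 2 - c * ‖x‖ ^ 2 / 2 - ⟪c • x, y - x⟫ = c * ‖y - x‖ ^ 2 / 2 := by
    rw [hsq, inner_smul_left]
    simp only [conj_trivial]
    ring
  rw [hrem, abs_div, abs_mul, abs_two, abs_of_nonneg (sq_nonneg ‖y - x‖)]
  exact le_of_eq (by ring)

lemma abs_sub_sub_inner_gradient_le [CompleteSpace F] {u : F → ℝ} (hu : Differentiable ℝ u)
    (hL : LipschitzWith 1 (gradient u)) (x y : F) :
    |u y - u x - ⟪gradient u x, y - x⟫| ≤ ‖y - x‖ ^ 2 := by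
  set a := gradient u x
  have hder : ∀ z ∈ Metric.closedBall x ‖y - x‖, HasFDerivWithinAt (fun z => u z - ⟪a, z⟫)
      (toDual ℝ F (gradient u z) - toDual ℝ F a) (Metric.closedBall x ‖y - x‖) z :=
    fun z _ =>
      ((hu z).hasGradientAt.hasFDerivAt.sub (toDual ℝ F a).hasFDerivAt).hasFDerivWithinAt
  have hbound : ∀ z ∈ Metric.closedBall x ‖y - x‖,
      ‖toDual ℝ F (gradient u z) - toDual ℝ F a‖ ≤ ‖y - x‖ := by
    intro z hz
    rw [← map_sub, LinearIsometryEquiv.norm_map, ← dist_eq_norm]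
    simpa using (hL.dist_le_mul z x).trans (by simpa [dist_eq_norm] using hz)
  have hmvt := (convex_closedBall x ‖y - x‖).norm_image_sub_le_of_norm_hasFDerivWithin_le hder
    hbound (Metric.mem_closedBall_self (norm_nonneg _)) (y := y) (by simp [dist_eq_norm])
  rwa [sub_sub_sub_comm, ← inner_sub_right, Real.norm_eq_abs, ← sq] at hmvt

lemma convexOn_univ_of_inner_gradient_sub_nonneg [CompleteSpace F] {v : F → ℝ}
    (hv : Differentiable ℝ v) (hmono : ∀ a b, 0 ≤ ⟪gradient v a - gradient v b, a - b⟫) :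
    ConvexOn ℝ univ v := by
  refine ⟨convex_univ, fun x _ y _ s t hs ht hst => ?_⟩
  have hderiv : ∀ r : ℝ, HasDerivAt (fun r => v (AffineMap.lineMap (k := ℝ) x y r))
      ⟪gradient v (AffineMap.lineMap x y r), y - x⟫ r :=
    fun r => (hv _).hasGradientAt.hasFDerivAt.comp_hasDerivAt r AffineMap.hasDerivAt_lineMap
  have hline : ConvexOn ℝ univ fun r => v (AffineMap.lineMap (k := ℝ) x y r) := by
    refine Monotone.convexOn_univ_of_deriv (fun r => (hderiv r).differentiableAt)
      fun r r' hr => ?_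
    rw [(hderiv r).deriv, (hderiv r').deriv, ← sub_nonneg, ← inner_sub_left]
    have hmono' := hmono (AffineMap.lineMap x y r') (AffineMap.lineMap x y r)
    have hdiff : AffineMap.lineMap x y r' - AffineMap.lineMap x y r = (r' - r) • (y - x) := by
      simp only [AffineMap.lineMap_apply_module']
      module
    rw [hdiff, inner_smul_right] at hmono'
    rcases hr.eq_or_lt with rfl | hlt
    · simp
    · exact nonneg_of_mul_nonneg_right (by linarith) (sub_pos.2 hlt)
  have hxy := hline.2 (mem_univ 0) (mem_univ 1) hs ht hst
  beta_reduce at hxy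
  rwa [smul_zero, smul_eq_mul, mul_one, zero_add, AffineMap.lineMap_apply_zero,
    AffineMap.lineMap_apply_one, AffineMap.lineMap_apply_module, ← hst, add_sub_cancel_right]
    at hxy

lemma ConvexOn.add_inner_le_of_forall_le {ψ : F → ℝ} (hψ : ConvexOn ℝ univ ψ) {x y : F}
    (hy : ∀ z, ψ y + ‖x - y‖ ^ 2 / 2 ≤ ψ z + ‖x - z‖ ^ 2 / 2) (z : F) :
    ψ y + ⟪x - y, z - y⟫ ≤ ψ z := by
  have hslope : ∀ t ∈ Ioo (0 : ℝ) 1, ⟪x - y, z - y⟫ ≤ ψ z - ψ y + t * ‖z - y‖ ^ 2 / 2 := by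
    rintro t ⟨ht0, ht1⟩
    have hmin := hy (y + t • (z - y))
    have hconv : ψ (y + t • (z - y)) ≤ (1 - t) * ψ y + t * ψ z := by
      have hseg : y + t • (z - y) = (1 - t) • y + t • z := by module
      simpa [hseg] using
        hψ.2 (mem_univ y) (mem_univ z) (sub_nonneg.2 ht1.le) ht0.le (sub_add_cancel 1 t)
    have hnorm : ‖x - (y + t • (z - y))‖ ^ 2
        = ‖x - y‖ ^ 2 - 2 * (t * ⟪x - y, z - y⟫) + t ^ 2 * ‖z - y‖ ^ 2 := by
      rw [← sub_sub, norm_sub_sq_real, inner_smul_right, norm_smul, Real.norm_of_nonneg ht0.le,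
        mul_pow]
    rw [hnorm] at hmin
    nlinarith
  have hlim : Tendsto (fun t : ℝ => ψ z - ψ y + t * ‖z - y‖ ^ 2 / 2) (𝓝[>] 0)
      (𝓝 (ψ z - ψ y)) := by
    have hcont : Continuous fun t : ℝ => ψ z - ψ y + t * ‖z - y‖ ^ 2 / 2 := by fun_prop
    simpa using (hcont.tendsto 0).mono_left nhdsWithin_le_nhds
  have := ge_of_tendsto hlim (mem_of_superset (Ioo_mem_nhdsGT one_pos) hslope)
  linarith

/-- `p x` is the proximal point of `ψ` at `x`, i.e. the minimiser of `z ↦ ψ z + ‖x - z‖² / 2`,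
characterised by its variational inequality. -/
def IsProxMap (ψ : F → ℝ) (p : F → F) : Prop :=
  ∀ x z, ψ (p x) + ⟪x - p x, z - p x⟫ ≤ ψ z

lemma exists_isProxMap [ProperSpace F] {ψ : F → ℝ} (hψ : ConvexOn ℝ univ ψ)
    (hcont : Continuous ψ) : ∃ p : F → F, IsProxMap ψ p := by
  have hmin : ∀ x, ∃ y, ∀ z, ψ y + ‖x - y‖ ^ 2 / 2 ≤ ψ z + ‖x - z‖ ^ 2 / 2 := by
    intro x
    obtain ⟨l, hl⟩ := hψ.exists_affine_minorant hcont.lowerSemicontinuous (sub_one_lt (ψ x))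
    have hcoercive : ∀ z, ψ x - 1 - ‖l‖ ^ 2 + ‖z - x‖ ^ 2 / 4 ≤ ψ z + ‖x - z‖ ^ 2 / 2 := by
      intro z
      rw [norm_sub_rev x z]
      linarith [hl z, neg_sq_div_le_apply_add l (z - x) one_half_pos]
    have hnorm : Tendsto (fun z => ‖z - x‖) (cocompact F) atTop :=
      tendsto_atTop_mono (fun z => by linarith [norm_sub_norm_le z x])
        (tendsto_atTop_add_const_right _ (-‖x‖) tendsto_norm_cocompact_atTop)
    refine (hcont.add (by fun_prop)).exists_forall_le (tendsto_atTop_mono hcoercive ?_)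
    exact tendsto_atTop_add_const_left _ _
      (((tendsto_pow_atTop two_ne_zero).comp hnorm).atTop_div_const four_pos)
  choose p hp using hmin
  exact ⟨p, fun x => hψ.add_inner_le_of_forall_le (hp x)⟩

namespace IsProxMap

variable {ψ : F → ℝ} {p : F → F}

lemma moreauEnvelope_le (h : IsProxMap ψ p) (x z : F) :
    moreauEnvelope ψ p x ≤ ψ z + ‖x - z‖ ^ 2 / 2 := by
  have hnorm : ‖x - z‖ ^ 2 = ‖x - p x‖ ^ 2 - 2 * ⟪x - p x, z - p x⟫ + ‖z - p x‖ ^ 2 := by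
    rw [← norm_sub_sq_real, sub_sub_sub_cancel_right]
  have := h x z
  unfold moreauEnvelope
  nlinarith [sq_nonneg ‖z - p x‖]

lemma norm_sub_sq_le_inner (h : IsProxMap ψ p) (x y : F) :
    ‖p x - p y‖ ^ 2 ≤ ⟪x - y, p x - p y⟫ := by
  have hx := h x (p y)
  have hy := h y (p x)
  have hswap : ⟪x - p x, p y - p x⟫ = -⟪x - p x, p x - p y⟫ := by
    rw [← inner_neg_right, neg_sub]
  have hsplit : ⟪x - y, p x - p y⟫ - ‖p x - p y‖ ^ 2
      = ⟪x - p x, p x - p y⟫ - ⟪y - p y, p x - p y⟫ := by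
    rw [← real_inner_self_eq_norm_sq, ← inner_sub_left, ← inner_sub_left, sub_sub_sub_comm]
  linarith

lemma lipschitzWith_one (h : IsProxMap ψ p) : LipschitzWith 1 p := by
  refine LipschitzWith.of_dist_le_mul fun x y => ?_
  rw [NNReal.coe_one, one_mul, dist_eq_norm, dist_eq_norm]
  have h1 := h.norm_sub_sq_le_inner x y
  have h2 := real_inner_le_norm (x - y) (p x - p y)
  nlinarith [norm_nonneg (p x - p y), norm_nonneg (x - y)]

lemma moreauEnvelope_sub_sub_inner_mem_Icc (h : IsProxMap ψ p) (x y : F) :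
    moreauEnvelope ψ p y - moreauEnvelope ψ p x - ⟪x - p x, y - x⟫
      ∈ Icc 0 (‖y - x‖ ^ 2 / 2) := by
  constructor
  · have hx := h x (p y)
    have hsq : 0 ≤ ‖(x - p x) - (y - p y)‖ ^ 2 := sq_nonneg _
    rw [norm_sub_sq_real] at hsq
    have hinner :
        ⟪x - p x, p y - p x⟫ - ⟪x - p x, y - x⟫ = ‖x - p x‖ ^ 2 - ⟪x - p x, y - p y⟫ := by
      rw [← inner_sub_right, ← real_inner_self_eq_norm_sq, ← inner_sub_right]
      exact congrArg _ (by abel)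
    unfold moreauEnvelope
    linarith
  · have hy := h.moreauEnvelope_le y (p x)
    have hnorm : ‖y - p x‖ ^ 2 = ‖x - p x‖ ^ 2 + 2 * ⟪x - p x, y - x⟫ + ‖y - x‖ ^ 2 := by
      rw [← norm_add_sq_real, sub_add_sub_cancel']
    unfold moreauEnvelope at hy ⊢
    linarith

lemma hasGradientAt (h : IsProxMap ψ p) [CompleteSpace F] (x : F) :
    HasGradientAt (fun y => moreauEnvelope ψ p y - ‖y‖ ^ 2 / 2) (-p x) x := by
  refine hasGradientAt_of_abs_sub_sub_inner_le_mul_sq (C := 1 / 2) fun y => ?_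
  obtain ⟨hlow, hup⟩ := h.moreauEnvelope_sub_sub_inner_mem_Icc x y
  have hsq : ‖y‖ ^ 2 = ‖x‖ ^ 2 + 2 * ⟪x, y - x⟫ + ‖y - x‖ ^ 2 := by
    rw [← norm_add_sq_real, add_sub_cancel]
  rw [inner_neg_left, abs_le]
  rw [inner_sub_left] at hlow hup
  constructor <;> linarith

end IsProxMap

section MoreauApproximation

variable {φ : F → ℝ}

lemma IsProxMap.mul_moreauEnvelope_div_le {p : F → F} {s : ℝ} (hs : 0 < s)
    (h : IsProxMap (fun z => φ z / s) p) (x z : F) :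
    s * moreauEnvelope (fun z => φ z / s) p x ≤ φ z + s * ‖x - z‖ ^ 2 / 2 := by
  calc s * moreauEnvelope (fun z => φ z / s) p x ≤ s * (φ z / s + ‖x - z‖ ^ 2 / 2) :=
        mul_le_mul_of_nonneg_left (h.moreauEnvelope_le x z) hs.le
    _ = φ z + s * ‖x - z‖ ^ 2 / 2 := by field_simp

lemma IsProxMap.mul_moreauEnvelope_div_le_mul {p q : F → F} {s t : ℝ} (hs : 0 < s)
    (hst : s ≤ t) (h : IsProxMap (fun z => φ z / s) p) (x : F) :
    s * moreauEnvelope (fun z => φ z / s) p x ≤ t * moreauEnvelope (fun z => φ z / t) q x := by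
  rw [mul_moreauEnvelope_div (hs.trans_le hst)]
  have := h.mul_moreauEnvelope_div_le hs x (q x)
  nlinarith [sq_nonneg ‖x - q x‖]

lemma monotone_mul_moreauEnvelope {P : ℕ → F → F}
    (hP : ∀ n : ℕ, IsProxMap (fun z => φ z / (n + 1)) (P n)) (x : F) :
    Monotone fun n : ℕ => (n + 1) * moreauEnvelope (fun z => φ z / (n + 1)) (P n) x :=
  fun m _ hmn => (hP m).mul_moreauEnvelope_div_le_mul (by positivity) (by gcongr) x

lemma tendsto_mul_moreauEnvelope (hφ : ConvexOn ℝ univ φ) (hlsc : LowerSemicontinuous φ)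
    {P : ℕ → F → F} (hP : ∀ n : ℕ, IsProxMap (fun z => φ z / (n + 1)) (P n)) (x : F) :
    Tendsto (fun n : ℕ => (n + 1) * moreauEnvelope (fun z => φ z / (n + 1)) (P n) x) atTop
      (𝓝 (φ x)) := by
  have hle : ∀ n : ℕ, (n + 1) * moreauEnvelope (fun z => φ z / (n + 1)) (P n) x ≤ φ x :=
    fun n => by simpa using (hP n).mul_moreauEnvelope_div_le (by positivity) x x
  convert tendsto_atTop_ciSup (monotone_mul_moreauEnvelope hP x) ⟨φ x, forall_mem_range.2 hle⟩
  refine (ciSup_eq_of_forall_le_of_forall_lt_exists_gt hle fun a ha => ?_).symm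
  obtain ⟨b, hab, hb⟩ := exists_between ha
  obtain ⟨l, hl⟩ := hφ.exists_affine_minorant hlsc hb
  obtain ⟨n, hn⟩ := exists_nat_gt (‖l‖ ^ 2 / (2 * (b - a)))
  refine ⟨n, lt_of_lt_of_le ?_ (sub_le_mul_moreauEnvelope_div (by positivity) hl)⟩
  have hsmall : ‖l‖ ^ 2 / (2 * (n + 1)) < b - a := by
    rw [div_lt_iff₀ (by positivity)]
    rw [div_lt_iff₀ (by linarith)] at hn
    nlinarith
  linarith

end MoreauApproximation

end InnerProductSpace

variable {d : ℕ}

local notation "E" => EuclideanSpace ℝ (Fin d)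

lemma IsProxMap.zolAdmissible {ψ : E → ℝ} {p : E → E} (h : IsProxMap ψ p) :
    ZolAdmissible fun x => moreauEnvelope ψ p x - ‖x‖ ^ 2 / 2 := by
  refine ⟨fun x => (h.hasGradientAt x).differentiableAt, ?_⟩
  simp only [fun x => (h.hasGradientAt x).gradient]
  exact h.lipschitzWith_one.neg

lemma zolAdmissible_neg_half_sq : ZolAdmissible fun x : E => -(‖x‖ ^ 2) / 2 := by
  have hgrad (x : E) : HasGradientAt (fun x : E => -(‖x‖ ^ 2) / 2) (-x) x := by
    simpa [neg_div] using hasGradientAt_mul_norm_sq_div_two (-1) x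
  refine ⟨fun x => (hgrad x).differentiableAt, ?_⟩
  simp only [fun x => (hgrad x).gradient]
  exact LipschitzWith.id.neg

lemma integral_neg_half_sq_sub_integral {μ ν : Measure (EuclideanSpace ℝ (Fin d))} :
    ∫ x, -(‖x‖ ^ 2) / 2 ∂μ - ∫ x, -(‖x‖ ^ 2) / 2 ∂ν = (m2 ν - m2 μ) / 2 := by
  rw [integral_div, integral_div, integral_neg, integral_neg, m2, m2]
  ring

lemma integrable_id_of_integrable_norm_sq {ρ : Measure (EuclideanSpace ℝ (Fin d))}
    [IsFiniteMeasure ρ] (hρ2 : Integrable (fun x => ‖x‖ ^ 2) ρ) : Integrable (fun x => x) ρ :=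
  ((memLp_two_iff_integrable_sq_norm aestronglyMeasurable_id).2 hρ2).integrable one_le_two

namespace ZolAdmissible

variable {u : EuclideanSpace ℝ (Fin d) → ℝ} {ρ : Measure (EuclideanSpace ℝ (Fin d))}

lemma convexOn_add_half_sq (hu : ZolAdmissible u) :
    ConvexOn ℝ univ fun x => u x + ‖x‖ ^ 2 / 2 := by
  have hgrad (x : E) : HasGradientAt (fun x => u x + ‖x‖ ^ 2 / 2) (gradient u x + x) x := by
    rw [hasGradientAt_iff_hasFDerivAt, map_add]
    exact (hu.1 x).hasGradientAt.hasFDerivAt.add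
      (by simpa using (hasGradientAt_mul_norm_sq_div_two 1 x).hasFDerivAt)
  refine convexOn_univ_of_inner_gradient_sub_nonneg (fun x => (hgrad x).differentiableAt)
    fun a b => ?_
  rw [(hgrad a).gradient, (hgrad b).gradient, add_sub_add_comm, inner_add_left,
    real_inner_self_eq_norm_sq]
  have hlip : ‖gradient u a - gradient u b‖ ≤ ‖a - b‖ := by
    simpa [dist_eq_norm] using hu.2.dist_le_mul a b
  nlinarith [real_inner_le_norm (gradient u a - gradient u b) (a - b), norm_nonneg (a - b),
    neg_le_of_abs_le (abs_real_inner_le_norm (gradient u a - gradient u b) (a - b))]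

lemma integrable_sub_sub_inner [IsFiniteMeasure ρ] (hu : ZolAdmissible u)
    (hρ2 : Integrable (fun x => ‖x‖ ^ 2) ρ) :
    Integrable (fun x => u x - u 0 - ⟪gradient u 0, x⟫) ρ :=
  hρ2.mono' ((hu.1.continuous.sub continuous_const).sub
      (continuous_const.inner continuous_id)).aestronglyMeasurable
    (ae_of_all _ fun x => by simpa using abs_sub_sub_inner_gradient_le hu.1 hu.2 0 x)

lemma integrable [IsFiniteMeasure ρ] (hu : ZolAdmissible u)
    (hρ2 : Integrable (fun x => ‖x‖ ^ 2) ρ) : Integrable u ρ := by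
  have hid := integrable_id_of_integrable_norm_sq hρ2
  refine (((hu.integrable_sub_sub_inner hρ2).add (integrable_const (u 0))).add
    (hid.const_inner (gradient u 0))).congr (ae_of_all _ fun x => ?_)
  simp only [Pi.add_apply]
  ring

lemma abs_integral_sub_le_m2 [IsProbabilityMeasure ρ] (hu : ZolAdmissible u)
    (hρ2 : Integrable (fun x => ‖x‖ ^ 2) ρ) :
    |∫ x, u x ∂ρ - (u 0 + ⟪gradient u 0, bary ρ⟫)| ≤ m2 ρ := by
  have hid := integrable_id_of_integrable_norm_sq hρ2
  have hsplit : ∫ x, u x ∂ρ - (u 0 + ⟪gradient u 0, bary ρ⟫)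
      = ∫ x, (u x - u 0 - ⟪gradient u 0, x⟫) ∂ρ := by
    have hsub : Integrable (fun x => u x - u 0) ρ := (hu.integrable hρ2).sub (integrable_const _)
    rw [integral_sub hsub (hid.const_inner _),
      integral_sub (hu.integrable hρ2) (integrable_const _), integral_const, integral_inner hid, bary, probReal_univ, one_smul, sub_sub]
  rw [hsplit, ← Real.norm_eq_abs]
  exact norm_integral_le_of_norm_le hρ2 (ae_of_all _ fun x => by
    simpa only [sub_zero, Real.norm_eq_abs] using abs_sub_sub_inner_gradient_le hu.1 hu.2 0 x)

lemma integral_add_half_sq [IsFiniteMeasure ρ] (hu : ZolAdmissible u)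
    (hρ2 : Integrable (fun x => ‖x‖ ^ 2) ρ) :
    ∫ x, (u x + ‖x‖ ^ 2 / 2) ∂ρ = ∫ x, u x ∂ρ + m2 ρ / 2 := by
  rw [integral_add (hu.integrable hρ2) (hρ2.div_const 2), integral_div, m2]

end ZolAdmissible

variable {μ ν : Measure (EuclideanSpace ℝ (Fin d))} [IsProbabilityMeasure μ]
  [IsProbabilityMeasure ν]

lemma ZolAdmissible.integral_sub_integral_le (hμ2 : Integrable (fun x => ‖x‖ ^ 2) μ)
    (hν2 : Integrable (fun x => ‖x‖ ^ 2) ν) (hbary : bary μ = bary ν) {u : E → ℝ}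
    (hu : ZolAdmissible u) : ∫ x, u x ∂μ - ∫ x, u x ∂ν ≤ m2 μ + m2 ν := by
  have hμ := abs_le.1 (hu.abs_integral_sub_le_m2 hμ2)
  have hν := abs_le.1 (hu.abs_integral_sub_le_m2 hν2)
  rw [hbary] at hμ
  linarith [hμ.2, hν.1]

lemma Z2_eq_iff (hμ2 : Integrable (fun x => ‖x‖ ^ 2) μ) (hν2 : Integrable (fun x => ‖x‖ ^ 2) ν)
    (hbary : bary μ = bary ν) :
    Z2 μ ν = (m2 ν - m2 μ) / 2 ↔
      ∀ u, ZolAdmissible u → ∫ x, u x ∂μ - ∫ x, u x ∂ν ≤ (m2 ν - m2 μ) / 2 := by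
  constructor
  · intro hZ u hu
    rw [← hZ]
    refine le_csSup ⟨m2 μ + m2 ν, ?_⟩ ⟨u, hu, rfl⟩
    rintro _ ⟨v, hv, rfl⟩
    exact hv.integral_sub_integral_le hμ2 hν2 hbary
  · intro h
    refine IsGreatest.csSup_eq ⟨⟨_, zolAdmissible_neg_half_sq, ?_⟩, ?_⟩
    · exact integral_neg_half_sq_sub_integral.symm
    · rintro _ ⟨u, hu, rfl⟩
      exact h u hu

lemma convexOrderLE_of_forall_zolAdmissible (hμ2 : Integrable (fun x => ‖x‖ ^ 2) μ)
    (hν2 : Integrable (fun x => ‖x‖ ^ 2) ν)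
    (h : ∀ u, ZolAdmissible u → ∫ x, (u x + ‖x‖ ^ 2 / 2) ∂μ ≤ ∫ x, (u x + ‖x‖ ^ 2 / 2) ∂ν) :
    ConvexOrderLE μ ν := by
  intro φ hφ hφμ hφν
  have hcont : Continuous φ := continuousOn_univ.1 (hφ.continuousOn isOpen_univ)
  choose P hP using fun n : ℕ => exists_isProxMap (ψ := fun z => φ z / (n + 1))
    (by simpa [div_eq_inv_mul] using hφ.smul (inv_nonneg.2 (n.cast_add_one_pos (α := ℝ)).le))
    (hcont.div_const _)
  set g : ℕ → E → ℝ := fun n x => (n + 1) * moreauEnvelope (fun z => φ z / (n + 1)) (P n) x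
  have hint {ρ : Measure E} [IsFiniteMeasure ρ] (hρ2 : Integrable (fun x => ‖x‖ ^ 2) ρ) (n : ℕ) :
      Integrable (g n) ρ := by
    simpa using (((hP n).zolAdmissible.integrable hρ2).add (hρ2.div_const 2)).const_mul (n + 1)
  have hle (n : ℕ) : ∫ x, g n x ∂μ ≤ ∫ x, g n x ∂ν := by
    simp only [g, integral_const_mul]
    exact mul_le_mul_of_nonneg_left (by simpa using h _ (hP n).zolAdmissible) (by positivity)
  have hlim {ρ : Measure E} [IsFiniteMeasure ρ] (hρ2 : Integrable (fun x => ‖x‖ ^ 2) ρ)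
      (hφρ : Integrable φ ρ) : Tendsto (fun n => ∫ x, g n x ∂ρ) atTop (𝓝 (∫ x, φ x ∂ρ)) :=
    integral_tendsto_of_tendsto_of_monotone (hint hρ2) hφρ
      (ae_of_all _ (monotone_mul_moreauEnvelope hP))
      (ae_of_all _ (tendsto_mul_moreauEnvelope hφ hcont.lowerSemicontinuous hP))
  exact le_of_tendsto_of_tendsto' (hlim hμ2 hφμ) (hlim hν2 hφν) hle

lemma convexOrderLE_iff_forall_zolAdmissible (hμ2 : Integrable (fun x => ‖x‖ ^ 2) μ)
    (hν2 : Integrable (fun x => ‖x‖ ^ 2) ν) :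
    ConvexOrderLE μ ν ↔
      ∀ u, ZolAdmissible u → ∫ x, u x ∂μ - ∫ x, u x ∂ν ≤ (m2 ν - m2 μ) / 2 := by
  have hgap {u : E → ℝ} (hu : ZolAdmissible u) :
      ∫ x, u x ∂μ - ∫ x, u x ∂ν ≤ (m2 ν - m2 μ) / 2 ↔
        ∫ x, (u x + ‖x‖ ^ 2 / 2) ∂μ ≤ ∫ x, (u x + ‖x‖ ^ 2 / 2) ∂ν := by
    rw [hu.integral_add_half_sq hμ2, hu.integral_add_half_sq hν2]
    constructor <;> intro <;> linarith
  refine ⟨fun h u hu => (hgap hu).2 ?_,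
    fun h => convexOrderLE_of_forall_zolAdmissible hμ2 hν2 fun u hu => (hgap hu).1 (h u hu)⟩
  exact h _ hu.convexOn_add_half_sq ((hu.integrable hμ2).add (hμ2.div_const 2))
    ((hu.integrable hν2).add (hν2.div_const 2))

theorem stmt_13
    {d : ℕ} (b : EuclideanSpace ℝ (Fin d)) (μ ν : Measure (EuclideanSpace ℝ (Fin d)))
    [IsProbabilityMeasure μ] [IsProbabilityMeasure ν]
    (hμ2 : Integrable (fun x => ‖x‖ ^ 2) μ) (hν2 : Integrable (fun x => ‖x‖ ^ 2) ν)
    (hμb : bary μ = b) (hνb : bary ν = b) :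
    (ConvexOrderLE μ ν ↔ Z2 μ ν = (m2 ν - m2 μ) / 2) ∧
    (ConvexOrderLE μ ν ↔
      (ZolAdmissible (fun x : EuclideanSpace ℝ (Fin d) => -(‖x‖ ^ 2) / 2) ∧
       (∫ x, -(‖x‖ ^ 2) / 2 ∂μ) - (∫ x, -(‖x‖ ^ 2) / 2 ∂ν) = Z2 μ ν)) := by
  have hZ2 : ConvexOrderLE μ ν ↔ Z2 μ ν = (m2 ν - m2 μ) / 2 :=
    (convexOrderLE_iff_forall_zolAdmissible hμ2 hν2).trans
      (Z2_eq_iff hμ2 hν2 (hμb.trans hνb.symm)).symm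
  rw [integral_neg_half_sq_sub_integral, eq_comm (a := (m2 ν - m2 μ) / 2)]
  exact ⟨hZ2, hZ2.trans (and_iff_right zolAdmissible_neg_half_sq).symm⟩

end
end
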